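/- Suppose E[Y_0 | Z = z] and E[Y_1 | Z = z] are continuous at a boundary point b, where every neighborhood of b contains points of both the treatment region T = {z : z ≥ 0} and its complement, and where the observed outcome satisfies Y = Y_1 on T and Y = Y_0 on T^c. Then the conditional average treatment effect τ(b) = E[Y_1 − Y_0 | Z = b] equals lim_{z→b, z∈T} E[Y | Z = z] − lim_{z→b, z∈T^c} E[Y | Z = z]; in particular τ(b) is determined by the conditional expectation of the observed outcome (identification). -/
import Mathlib


open Filter Topology Set

/-- **Identification of the CATE.** If `m0 = E[Y_0|Z=·]` and `m1 = E[Y_1|Z=·]`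
are continuous at a boundary point `b` of the treatment region `T = {z : z ≥ 0}`, with
`b ∈ T` and `b ∈ closure Tᶜ`, and the conditional expectation `m` of the observed outcome
satisfies `m = m1` on `T` and `m = m0` on `Tᶜ`, then
`lim_{z→b, z∈T} m(z) = m1(b)` and `lim_{z→b, z∈Tᶜ} m(z) = m0(b)`; in particular the CATE
`τ(b) = m1(b) − m0(b)` equals the difference of any such limits of the observed conditional
expectation, so it is identified. -/
theorem cate_identification
    {d : ℕ} (m0 m1 m : (Fin d → ℝ) → ℝ) (b : Fin d → ℝ)
    (T : Set (Fin d → ℝ)) (hT : T = {z | ∀ i, 0 ≤ z i})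
    (hbT : b ∈ T) (hbTc : b ∈ closure Tᶜ)
    (hm0 : ContinuousAt m0 b) (hm1 : ContinuousAt m1 b)
    (hmT : ∀ z ∈ T, m z = m1 z) (hmTc : ∀ z ∈ Tᶜ, m z = m0 z) :
    Tendsto m (𝓝[T] b) (𝓝 (m1 b)) ∧
    Tendsto m (𝓝[Tᶜ] b) (𝓝 (m0 b)) ∧
    ∀ L₁ L₂ : ℝ, Tendsto m (𝓝[T] b) (𝓝 L₁) → Tendsto m (𝓝[Tᶜ] b) (𝓝 L₂) →
      m1 b - m0 b = L₁ - L₂ := by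
  have h1 : Tendsto m (𝓝[T] b) (𝓝 (m1 b)) := by
    refine (hm1.continuousWithinAt (s := T)).tendsto.congr' ?_
    filter_upwards [self_mem_nhdsWithin] with z hz using (hmT z hz).symm
  have h2 : Tendsto m (𝓝[Tᶜ] b) (𝓝 (m0 b)) := by
    refine (hm0.continuousWithinAt (s := Tᶜ)).tendsto.congr' ?_
    filter_upwards [self_mem_nhdsWithin] with z hz using (hmTc z hz).symm
  have n1 : (𝓝[T] b).NeBot := mem_closure_iff_nhdsWithin_neBot.mp (subset_closure hbT)
  have n2 : (𝓝[Tᶜ] b).NeBot := mem_closure_iff_nhdsWithin_neBot.mp hbTc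
  refine ⟨h1, h2, fun L₁ L₂ t1 t2 => ?_⟩
  rw [tendsto_nhds_unique t1 h1, tendsto_nhds_unique t2 h2]
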